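/- For every n ∈ ℕ, there exists α > -1 and a point z in the open unit disk such that the rational function ξ ↦ p_{α,n}(z̄ξ)/(1 - z̄ξ)^{2+α+2n} has exactly n zeros (counting multiplicity) in the open unit disk, where p_{α,n} are the polynomials from the recursion p_{α,1}(ζ)=4(2+α)+4(2+α)²ζ, p_{α,m+1} = 4p_{α,m}'(1-ζ)² + 4(2+α+2m)p_{α,m}(1-ζ) + 4ζp_{α,m}''(1-ζ)² + 8(2+α+2m)ζp_{α,m}'(1-ζ) + 4(2+α+2m)(3+α+2m)ζp_{α,m}. -/

import Mathlib

/-!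
The leading coefficient of `p_{α,n}` is `∏_{m<n} 4(2+α+m)²`, of order `α^{2n}`, while the
coefficients of lower degree have `ℓ¹` norm `O(α^{2n-1})`. Indeed, the lower part of `p_{α,m+1}`
is bounded by `O(α)` times the whole of `p_{α,m}` plus `O(α²)` times the lower part of `p_{α,m}`;
the `O(α²)` comes only from the term `4(2+α+2m)(3+α+2m) ζ p_{α,m}`, in which the factor `ζ`
pushes the leading coefficient of `p_{α,m}` up to degree `m+1`. So for large `α` the leading
coefficient beats the sum of the others, and comparing `|a_n ζ^n|` with `∑_{k<n} |a_k| |ζ|^k`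
puts all `n` roots in the unit disc. For real `z` with `|z|` between the largest root modulus
and `1`, the roots of `ξ ↦ p_{α,n}(z̄ξ)` are those of `p_{α,n}` divided by `z̄`, still in the disc,
while `(1 - z̄ξ)^{2+α+2n}` does not vanish there.
-/

open Polynomial Metric Complex

/-- The recursion defining the numerator polynomials `p_{α,n}` of the iterated
associated-weight Bergman kernels. -/
def IsKernelNumeratorSeq (α : ℝ) (p : ℕ → Polynomial ℂ) : Prop :=
  p 1 = C (4 * (2 + (α:ℂ))) + C (4 * (2 + (α:ℂ)) ^ 2) * X ∧
  ∀ m : ℕ, 1 ≤ m → p (m + 1) =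
    4 * derivative (p m) * (1 - X) ^ 2
    + C (4 * (2 + (α:ℂ) + 2 * (m:ℂ))) * p m * (1 - X)
    + 4 * X * derivative (derivative (p m)) * (1 - X) ^ 2
    + C (8 * (2 + (α:ℂ) + 2 * (m:ℂ))) * X * derivative (p m) * (1 - X)
    + C (4 * (2 + (α:ℂ) + 2 * (m:ℂ)) * (3 + (α:ℂ) + 2 * (m:ℂ))) * X * p m

lemma coeff_mul_one_sub_X {R : Type*} [Ring R] (f : R[X]) (k : ℕ) :
    (f * (1 - X)).coeff (k + 1) = f.coeff (k + 1) - f.coeff k := by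
  simp [mul_one_sub, coeff_mul_X]

lemma coeff_X_mul_derivative {R : Type*} [Semiring R] (f : R[X]) (k : ℕ) :
    (X * derivative f).coeff k = f.coeff k * k := by
  cases k <;> simp [coeff_derivative, coeff_X_mul]

section CoeffL1

variable {K : Type*} [NormedField K]

noncomputable def coeffL1 (N : ℕ) (q : K[X]) : ℝ := ∑ k ∈ Finset.range N, ‖q.coeff k‖

lemma coeffL1_nonneg (N : ℕ) (q : K[X]) : 0 ≤ coeffL1 N q :=
  Finset.sum_nonneg fun _ _ => norm_nonneg _

lemma coeffL1_succ (N : ℕ) (q : K[X]) : coeffL1 (N + 1) q = coeffL1 N q + ‖q.coeff N‖ :=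
  Finset.sum_range_succ _ _

lemma coeffL1_mono {N M : ℕ} (h : N ≤ M) (q : K[X]) : coeffL1 N q ≤ coeffL1 M q :=
  Finset.sum_le_sum_of_subset_of_nonneg (Finset.range_subset_range.mpr h)
    fun _ _ _ => norm_nonneg _

lemma coeffL1_of_natDegree_lt {N M : ℕ} {q : K[X]} (hq : q.natDegree < M) (h : M ≤ N) :
    coeffL1 N q = coeffL1 M q := by
  refine (Finset.sum_subset (Finset.range_subset_range.mpr h) fun k _ hk => ?_).symm
  rw [coeff_eq_zero_of_natDegree_lt (hq.trans_le (by simpa using hk)), norm_zero]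

lemma coeffL1_le_of_natDegree_lt {N M : ℕ} {q : K[X]} (hq : q.natDegree < M) :
    coeffL1 N q ≤ coeffL1 M q :=
  (coeffL1_mono (le_max_left N M) q).trans_eq (coeffL1_of_natDegree_lt hq (le_max_right N M))

lemma coeffL1_add_le (N : ℕ) (f g : K[X]) : coeffL1 N (f + g) ≤ coeffL1 N f + coeffL1 N g := by
  simp only [coeffL1, ← Finset.sum_add_distrib, coeff_add]
  exact Finset.sum_le_sum fun _ _ => norm_add_le _ _

lemma coeffL1_C_mul (N : ℕ) (c : K) (q : K[X]) : coeffL1 N (C c * q) = ‖c‖ * coeffL1 N q := by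
  simp only [coeffL1, Finset.mul_sum, coeff_C_mul, norm_mul]

lemma coeffL1_X_mul (N : ℕ) (q : K[X]) : coeffL1 (N + 1) (X * q) = coeffL1 N q := by
  simp only [coeffL1, Finset.sum_range_succ', coeff_X_mul, coeff_X_mul_zero, norm_zero, add_zero]

lemma coeffL1_sub_le (N : ℕ) (f g : K[X]) : coeffL1 N (f - g) ≤ coeffL1 N f + coeffL1 N g := by
  simp only [coeffL1, ← Finset.sum_add_distrib, coeff_sub]
  exact Finset.sum_le_sum fun _ _ => norm_sub_le _ _

lemma coeffL1_X_mul_le (N : ℕ) (q : K[X]) : coeffL1 N (X * q) ≤ coeffL1 N q :=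
  (coeffL1_mono N.le_succ _).trans_eq (coeffL1_X_mul N q)

lemma coeffL1_mul_one_sub_X_le (N : ℕ) (q : K[X]) :
    coeffL1 N (q * (1 - X)) ≤ 2 * coeffL1 N q := by
  rw [mul_one_sub, mul_comm q X]
  linarith [coeffL1_sub_le N q (X * q), coeffL1_X_mul_le N q]

lemma coeffL1_derivative_le (N : ℕ) (q : K[X]) :
    coeffL1 N (derivative q) ≤ N * coeffL1 (N + 1) q :=
  calc coeffL1 N (derivative q) ≤ ∑ k ∈ Finset.range N, N * ‖q.coeff (k + 1)‖ := by
        refine Finset.sum_le_sum fun k hk => ?_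
        rw [coeff_derivative, norm_mul, mul_comm]
        gcongr
        calc ‖(k : K) + 1‖ = ‖((k + 1 : ℕ) : K)‖ := by push_cast; rfl
          _ ≤ (k + 1 : ℕ) := (Nat.norm_cast_le _).trans_eq (by rw [norm_one, mul_one])
          _ ≤ N := by exact_mod_cast Finset.mem_range.mp hk
    _ ≤ N * coeffL1 (N + 1) q := by
        rw [← Finset.mul_sum, coeffL1, Finset.sum_range_succ']
        gcongr
        exact le_add_of_nonneg_right (norm_nonneg _)

lemma coeffL1_derivative_le_of_natDegree_le {m : ℕ} {q : K[X]} (hq : q.natDegree ≤ m) :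
    coeffL1 (m + 1) (derivative q) ≤ (m + 1) * coeffL1 (m + 1) q := by
  refine (coeffL1_derivative_le _ _).trans_eq ?_
  rw [coeffL1_of_natDegree_lt (Nat.lt_succ_of_le hq) (Nat.le_succ _)]
  push_cast
  rfl

lemma norm_lt_one_of_isRoot_of_coeffL1_lt {n : ℕ} {q : K[X]} (hq : q.natDegree ≤ n)
    (hlead : coeffL1 n q < ‖q.coeff n‖) {x : K} (hx : q.IsRoot x) : ‖x‖ < 1 := by
  by_contra! hx1
  have hsum : q.coeff n * x ^ n = -∑ k ∈ Finset.range n, q.coeff k * x ^ k := by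
    have := hx.eq_zero
    rw [eval_eq_sum_range' (Nat.lt_succ_of_le hq), Finset.sum_range_succ] at this
    linear_combination this
  have : ‖q.coeff n‖ * ‖x‖ ^ n ≤ coeffL1 n q * ‖x‖ ^ n :=
    calc ‖q.coeff n‖ * ‖x‖ ^ n = ‖∑ k ∈ Finset.range n, q.coeff k * x ^ k‖ := by
          rw [← norm_pow, ← norm_mul, hsum, norm_neg]
      _ ≤ ∑ k ∈ Finset.range n, ‖q.coeff k‖ * ‖x‖ ^ n := by
          refine (norm_sum_le _ _).trans (Finset.sum_le_sum fun k hk => ?_)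
          rw [norm_mul, norm_pow]
          gcongr
          exact (Finset.mem_range.mp hk).le
      _ = coeffL1 n q * ‖x‖ ^ n := (Finset.sum_mul _ _ _).symm
  exact hlead.not_ge (le_of_mul_le_mul_right this (by positivity))

end CoeffL1

lemma card_roots_comp_C_mul_X_filter_norm_lt_one {K : Type*} [NormedField K] [IsAlgClosed K]
    {q : K[X]} {c : K} (hc : c ≠ 0) (h : ∀ x ∈ q.roots, ‖x‖ < ‖c‖) :
    ((q.comp (C c * X)).roots.filter fun ξ => ‖ξ‖ < 1).card = q.natDegree := by
  have hdisc : ∀ ξ ∈ (q.comp (C c * X)).roots, ‖ξ‖ < 1 := by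
    intro ξ hξ
    obtain ⟨hne, hroot⟩ := mem_roots'.mp hξ
    have hq : q ≠ 0 := by rintro rfl; simp at hne
    have hcξ : ‖c * ξ‖ < ‖c‖ := h _ ((mem_roots hq).mpr (by simpa [eval_comp] using hroot))
    rw [norm_mul] at hcξ
    exact (mul_lt_iff_lt_one_right (norm_pos_iff.mpr hc)).mp hcξ
  rw [Multiset.filter_eq_self.mpr hdisc, IsAlgClosed.card_roots_eq_natDegree, natDegree_comp,
    natDegree_C_mul_X c hc, mul_one]

lemma Multiset.exists_lt_one_forall_norm_lt {E : Type*} [SeminormedAddGroup E] (s : Multiset E)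
    (h : ∀ x ∈ s, ‖x‖ < 1) : ∃ r : ℝ, 0 < r ∧ r < 1 ∧ ∀ x ∈ s, ‖x‖ < r := by
  classical
  set M := s.toFinset.sup (‖·‖₊)
  have hM : (M : ℝ) < 1 := by
    rw [← NNReal.coe_one, NNReal.coe_lt_coe, Finset.sup_lt_iff zero_lt_one]
    simpa [← NNReal.coe_lt_coe] using h
  obtain ⟨r, hMr, hr1⟩ := exists_between hM
  refine ⟨r, M.coe_nonneg.trans_lt hMr, hr1, fun x hx => ?_⟩
  have hx : ‖x‖₊ ≤ M := Finset.le_sup (f := (‖·‖₊)) (Multiset.mem_toFinset.mpr hx)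
  exact (NNReal.coe_le_coe.mpr hx).trans_lt hMr

lemma div_one_sub_cpow_eq_zero_iff {a w s : ℂ} (hw : ‖w‖ < 1) : a / (1 - w) ^ s = 0 ↔ a = 0 := by
  have hne : 1 - w ≠ 0 := by
    rw [sub_ne_zero]
    rintro rfl
    simp at hw
  rw [div_eq_zero_iff, or_iff_left (by simp [cpow_eq_zero_iff, hne])]

namespace IsKernelNumeratorSeq

variable {α : ℝ} {p : ℕ → ℂ[X]}

lemma eq_succ (hp : IsKernelNumeratorSeq α p) {m : ℕ} (hm : 1 ≤ m) :
    p (m + 1) = C 4 * (derivative (p m) * (1 - X) * (1 - X))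
      + C (4 * (2 + (α : ℂ) + 2 * m)) * (p m * (1 - X))
      + C 4 * (X * derivative (derivative (p m)) * (1 - X) * (1 - X))
      + C (8 * (2 + (α : ℂ) + 2 * m)) * (X * derivative (p m) * (1 - X))
      + C (4 * (2 + (α : ℂ) + 2 * m) * (3 + (α : ℂ) + 2 * m)) * (X * p m) := by
  rw [hp.2 m hm]
  simp only [map_ofNat]
  ring

lemma coeff_succ_add_two (hp : IsKernelNumeratorSeq α p) {m : ℕ} (hm : 1 ≤ m) (k : ℕ) :
    (p (m + 1)).coeff (k + 2) = 4 * (k + 3) ^ 2 * (p m).coeff (k + 3)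
      + (4 * (2 + (α : ℂ) + 2 * m) * (2 * k + 5) - 8 * (k + 2) ^ 2) * (p m).coeff (k + 2)
      + 4 * (1 + (α : ℂ) + 2 * m - k) ^ 2 * (p m).coeff (k + 1) := by
  rw [hp.eq_succ hm]
  simp only [coeff_add, coeff_C_mul, coeff_mul_one_sub_X, coeff_X_mul_derivative,
    coeff_derivative, coeff_X_mul]
  push_cast
  ring

lemma coeff_one_zero (hp : IsKernelNumeratorSeq α p) :
    (p 1).coeff 0 = ((4 * (2 + α) : ℝ) : ℂ) := by
  rw [hp.1, coeff_add, coeff_C_mul_X, coeff_C]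
  push_cast
  simp

lemma coeff_one_one (hp : IsKernelNumeratorSeq α p) :
    (p 1).coeff 1 = ((4 * (2 + α) ^ 2 : ℝ) : ℂ) := by
  rw [hp.1, coeff_add, coeff_C_mul_X, coeff_C]
  push_cast
  simp

lemma natDegree_le (hp : IsKernelNumeratorSeq α p) {m : ℕ} (hm : 1 ≤ m) :
    (p m).natDegree ≤ m := by
  induction m, hm using Nat.le_induction with
  | base => rw [hp.1]; compute_degree
  | succ m hm ih =>
    refine natDegree_le_iff_coeff_eq_zero.mpr fun N hN => ?_
    obtain ⟨k, rfl⟩ : ∃ k, N = k + 2 := ⟨N - 2, by omega⟩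
    simp [hp.coeff_succ_add_two hm,
      coeff_eq_zero_of_natDegree_lt (ih.trans_lt (by omega : m < k + 1)),
      coeff_eq_zero_of_natDegree_lt (ih.trans_lt (by omega : m < k + 2)),
      coeff_eq_zero_of_natDegree_lt (ih.trans_lt (by omega : m < k + 3))]

lemma coeff_succ_self (hp : IsKernelNumeratorSeq α p) {m : ℕ} (hm : 1 ≤ m) :
    (p (m + 1)).coeff (m + 1) = 4 * (2 + (α : ℂ) + m) ^ 2 * (p m).coeff m := by
  obtain ⟨j, rfl⟩ : ∃ j, m = j + 1 := ⟨m - 1, by omega⟩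
  have hdeg := hp.natDegree_le hm
  rw [hp.coeff_succ_add_two hm j, coeff_eq_zero_of_natDegree_lt (hdeg.trans_lt (by omega)),
    coeff_eq_zero_of_natDegree_lt (hdeg.trans_lt (by omega))]
  push_cast
  ring

lemma norm_coeff_succ_self (hp : IsKernelNumeratorSeq α p) {m : ℕ} (hm : 1 ≤ m) :
    ‖(p (m + 1)).coeff (m + 1)‖ = 4 * (2 + α + m) ^ 2 * ‖(p m).coeff m‖ := by
  rw [hp.coeff_succ_self hm, norm_mul]
  congr 1
  rw [show 4 * (2 + (α : ℂ) + m) ^ 2 = ((4 * (2 + α + m) ^ 2 : ℝ) : ℂ) by push_cast; rfl]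
  exact Complex.norm_of_nonneg (by positivity)

lemma pow_le_norm_coeff_self (hp : IsKernelNumeratorSeq α p) (hα : -1 ≤ α) {n : ℕ}
    (hn : 1 ≤ n) :
    (α + 3) ^ (2 * n) ≤ ‖(p n).coeff n‖ := by
  induction n, hn using Nat.le_induction with
  | base =>
    rw [hp.coeff_one_one, Complex.norm_of_nonneg (by positivity), mul_one]
    nlinarith [mul_nonneg (by linarith : 0 ≤ α + 1) (by linarith : 0 ≤ 3 * α + 7)]
  | succ m hm ih =>
    have h3 : (α + 3) ^ 2 ≤ 4 * (2 + α + m) ^ 2 := by nlinarith [(m.cast_nonneg : (0 : ℝ) ≤ m)]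
    rw [hp.norm_coeff_succ_self hm, mul_add, mul_one, pow_add, mul_comm]
    exact mul_le_mul h3 ih (pow_nonneg (by linarith) _) (by positivity)

lemma coeffL1_succ_le_termwise (hp : IsKernelNumeratorSeq α p) {m : ℕ} (hm : 1 ≤ m)
    (hα : -1 ≤ α) :
    coeffL1 (m + 1) (p (m + 1)) ≤ 4 * coeffL1 (m + 1) (derivative (p m) * (1 - X) * (1 - X))
      + 4 * (2 + α + 2 * m) * coeffL1 (m + 1) (p m * (1 - X))
      + 4 * coeffL1 (m + 1) (X * derivative (derivative (p m)) * (1 - X) * (1 - X))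
      + 8 * (2 + α + 2 * m) * coeffL1 (m + 1) (X * derivative (p m) * (1 - X))
      + 4 * (2 + α + 2 * m) * (3 + α + 2 * m) * coeffL1 m (p m) := by
  have hA0 : 0 ≤ 2 + α + 2 * m := by linarith [(m.cast_nonneg : (0 : ℝ) ≤ m)]
  have hA : ‖(2 + (α : ℂ) + 2 * m)‖ = 2 + α + 2 * m := by
    rw [show (2 + (α : ℂ) + 2 * m) = ((2 + α + 2 * m : ℝ) : ℂ) by push_cast; rfl]
    exact Complex.norm_of_nonneg hA0
  have hA1 : ‖(3 + (α : ℂ) + 2 * m)‖ = 3 + α + 2 * m := by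
    rw [show (3 + (α : ℂ) + 2 * m) = ((3 + α + 2 * m : ℝ) : ℂ) by push_cast; rfl]
    exact Complex.norm_of_nonneg (by linarith)
  have hsplit (a b c d e : ℂ[X]) : coeffL1 (m + 1) (a + b + c + d + e) ≤ coeffL1 (m + 1) a
      + coeffL1 (m + 1) b + coeffL1 (m + 1) c + coeffL1 (m + 1) d + coeffL1 (m + 1) e := by
    linarith [coeffL1_add_le (m + 1) (a + b + c + d) e, coeffL1_add_le (m + 1) (a + b + c) d,
      coeffL1_add_le (m + 1) (a + b) c, coeffL1_add_le (m + 1) a b]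
  rw [hp.eq_succ hm]
  refine (hsplit _ _ _ _ _).trans_eq ?_
  simp only [coeffL1_C_mul, norm_mul, hA, hA1, coeffL1_X_mul]
  norm_num

lemma coeffL1_succ_le (hp : IsKernelNumeratorSeq α p) {m : ℕ} (hm : 1 ≤ m) (hα : -1 ≤ α) :
    coeffL1 (m + 1) (p (m + 1)) ≤
      8 * (2 * (m + 1) * (m + 2) + (2 * m + 3) * (2 + α + 2 * m)) * coeffL1 (m + 1) (p m)
        + 4 * (2 + α + 2 * m) * (3 + α + 2 * m) * coeffL1 m (p m) := by
  refine (hp.coeffL1_succ_le_termwise hm hα).trans ?_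
  set q := p m
  set T := coeffL1 (m + 1) q
  have hdeg : q.natDegree ≤ m := hp.natDegree_le hm
  have hA0 : 0 ≤ 2 + α + 2 * m := by linarith [(m.cast_nonneg : (0 : ℝ) ≤ m)]
  have hd1 : coeffL1 (m + 1) (derivative q) ≤ (m + 1) * T :=
    coeffL1_derivative_le_of_natDegree_le hdeg
  have hd2 : coeffL1 (m + 1) (derivative (derivative q)) ≤ (m + 1) * ((m + 1) * T) :=
    (coeffL1_derivative_le_of_natDegree_le ((natDegree_derivative_le q).trans (by omega))).trans
      (by gcongr)
  have b1 : coeffL1 (m + 1) (derivative q * (1 - X) * (1 - X)) ≤ 4 * ((m + 1) * T) := by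
    linarith [coeffL1_mul_one_sub_X_le (m + 1) (derivative q * (1 - X)),
      coeffL1_mul_one_sub_X_le (m + 1) (derivative q)]
  have b2 : coeffL1 (m + 1) (q * (1 - X)) ≤ 2 * T := coeffL1_mul_one_sub_X_le _ _
  have b3 : coeffL1 (m + 1) (X * derivative (derivative q) * (1 - X) * (1 - X))
      ≤ 4 * ((m + 1) * ((m + 1) * T)) := by
    linarith [coeffL1_mul_one_sub_X_le (m + 1) (X * derivative (derivative q) * (1 - X)),
      coeffL1_mul_one_sub_X_le (m + 1) (X * derivative (derivative q)),
      coeffL1_X_mul_le (m + 1) (derivative (derivative q))]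
  have b4 : coeffL1 (m + 1) (X * derivative q * (1 - X)) ≤ 2 * ((m + 1) * T) := by
    linarith [coeffL1_mul_one_sub_X_le (m + 1) (X * derivative q),
      coeffL1_X_mul_le (m + 1) (derivative q)]
  calc _ ≤ 4 * (4 * ((m + 1) * T)) + 4 * (2 + α + 2 * m) * (2 * T)
        + 4 * (4 * ((m + 1) * ((m + 1) * T))) + 8 * (2 + α + 2 * m) * (2 * ((m + 1) * T))
        + 4 * (2 + α + 2 * m) * (3 + α + 2 * m) * coeffL1 m q := by
        gcongr
    _ = _ := by ring

lemma coeffL1_one_le (hp : IsKernelNumeratorSeq α p) (hα : 0 ≤ α) :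
    coeffL1 1 (p 1) ≤ 8 * (α + 3) ∧ coeffL1 2 (p 1) ≤ 8 * (α + 3) ^ 2 := by
  simp only [coeffL1, Finset.sum_range_succ, Finset.sum_range_zero, hp.coeff_one_zero,
    hp.coeff_one_one, Complex.norm_of_nonneg (by positivity : (0 : ℝ) ≤ 4 * (2 + α)),
    Complex.norm_of_nonneg (by positivity : (0 : ℝ) ≤ 4 * (2 + α) ^ 2)]
  constructor <;> nlinarith

lemma coeffL1_succ_le_pow (hp : IsKernelNumeratorSeq α p) (hα : 0 ≤ α) {l : ℕ} {K : ℝ}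
    (hK : 0 ≤ K) (hS : coeffL1 (l + 1) (p (l + 1)) ≤ K * (α + 3) ^ (2 * l + 1))
    (hT : coeffL1 (l + 2) (p (l + 1)) ≤ K * (α + 3) ^ (2 * l + 2)) :
    coeffL1 (l + 2) (p (l + 2)) ≤ 64 * (l + 3) ^ 2 * K * (α + 3) ^ (2 * l + 3) ∧
      coeffL1 (l + 3) (p (l + 2)) ≤ 64 * (l + 3) ^ 2 * K * (α + 3) ^ (2 * l + 4) := by
  have hl : (0 : ℝ) ≤ l := l.cast_nonneg
  have ht : (1 : ℝ) ≤ α + 3 := by linarith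
  have hcT : 8 * (2 * ((l + 1 : ℕ) + 1) * ((l + 1 : ℕ) + 2) + (2 * (l + 1 : ℕ) + 3)
      * (2 + α + 2 * (l + 1 : ℕ))) ≤ 56 * (l + 3) ^ 2 * (α + 3) := by
    push_cast
    nlinarith [mul_nonneg hl hα, mul_nonneg (mul_nonneg hl hl) hα]
  have hcS : 4 * (2 + α + 2 * (l + 1 : ℕ)) * (3 + α + 2 * (l + 1 : ℕ))
      ≤ 4 * ((l + 3) * (α + 3)) ^ 2 := by
    push_cast
    nlinarith [mul_nonneg hl hα, mul_nonneg (mul_nonneg hl hl) hα]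
  have hlead : ‖(p (l + 2)).coeff (l + 2)‖
      ≤ 4 * ((l + 3) * (α + 3)) ^ 2 * coeffL1 (l + 2) (p (l + 1)) := by
    rw [hp.norm_coeff_succ_self (m := l + 1) (by omega), coeffL1_succ]
    have : 2 + α + (l + 1 : ℕ) ≤ (l + 3) * (α + 3) := by
      push_cast
      nlinarith [mul_nonneg hl hα]
    gcongr
    exact le_add_of_nonneg_left (coeffL1_nonneg _ _)
  have hS' : coeffL1 (l + 2) (p (l + 2)) ≤ 60 * (l + 3) ^ 2 * K * (α + 3) ^ (2 * l + 3) :=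
    calc coeffL1 (l + 2) (p (l + 2))
        ≤ 56 * (l + 3) ^ 2 * (α + 3) * (K * (α + 3) ^ (2 * l + 2))
          + 4 * ((l + 3) * (α + 3)) ^ 2 * (K * (α + 3) ^ (2 * l + 1)) :=
          (hp.coeffL1_succ_le (m := l + 1) (by omega) (by linarith)).trans (add_le_add
            (mul_le_mul hcT hT (coeffL1_nonneg _ _) (by positivity))
            (mul_le_mul hcS hS (coeffL1_nonneg _ _) (by positivity)))
      _ = 60 * (l + 3) ^ 2 * K * (α + 3) ^ (2 * l + 3) := by ring
  refine ⟨hS'.trans (by gcongr; norm_num), ?_⟩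
  calc coeffL1 (l + 3) (p (l + 2))
      = coeffL1 (l + 2) (p (l + 2)) + ‖(p (l + 2)).coeff (l + 2)‖ := coeffL1_succ _ _
    _ ≤ 60 * (l + 3) ^ 2 * K * (α + 3) ^ (2 * l + 3)
        + 4 * ((l + 3) * (α + 3)) ^ 2 * (K * (α + 3) ^ (2 * l + 2)) :=
        add_le_add hS' (hlead.trans (mul_le_mul_of_nonneg_left hT (by positivity)))
    _ = 60 * ((l + 3) ^ 2 * K) * (α + 3) ^ (2 * l + 3)
        + 4 * ((l + 3) ^ 2 * K) * (α + 3) ^ (2 * l + 4) := by ring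
    _ ≤ 60 * ((l + 3) ^ 2 * K) * (α + 3) ^ (2 * l + 4)
        + 4 * ((l + 3) ^ 2 * K) * (α + 3) ^ (2 * l + 4) := by
        gcongr
        omega
    _ = 64 * (l + 3) ^ 2 * K * (α + 3) ^ (2 * l + 4) := by ring

lemma exists_coeffL1_le_pow (l : ℕ) : ∃ K : ℝ, 0 ≤ K ∧ ∀ α : ℝ, 0 ≤ α → ∀ p : ℕ → ℂ[X],
    IsKernelNumeratorSeq α p → coeffL1 (l + 1) (p (l + 1)) ≤ K * (α + 3) ^ (2 * l + 1) ∧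
      coeffL1 (l + 2) (p (l + 1)) ≤ K * (α + 3) ^ (2 * l + 2) := by
  induction l with
  | zero => exact ⟨8, by norm_num, fun α hα p hp => by simpa using hp.coeffL1_one_le hα⟩
  | succ l ih =>
    obtain ⟨K, hK, hbound⟩ := ih
    exact ⟨64 * (l + 3) ^ 2 * K, by positivity, fun α hα p hp =>
      hp.coeffL1_succ_le_pow hα hK (hbound α hα p hp).1 (hbound α hα p hp).2⟩

lemma exists_roots_norm_lt_one (l : ℕ) : ∃ α : ℝ, 0 ≤ α ∧ ∀ p : ℕ → ℂ[X],
    IsKernelNumeratorSeq α p →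
      (p (l + 1)).natDegree = l + 1 ∧ ∀ x ∈ (p (l + 1)).roots, ‖x‖ < 1 := by
  obtain ⟨K, hK, hbound⟩ := exists_coeffL1_le_pow l
  refine ⟨K, hK, fun p hp => ?_⟩
  have hdom : coeffL1 (l + 1) (p (l + 1)) < ‖(p (l + 1)).coeff (l + 1)‖ :=
    calc coeffL1 (l + 1) (p (l + 1)) ≤ K * (K + 3) ^ (2 * l + 1) := (hbound K hK p hp).1
      _ < (K + 3) * (K + 3) ^ (2 * l + 1) := by gcongr; linarith
      _ = (K + 3) ^ (2 * (l + 1)) := by ring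
      _ ≤ ‖(p (l + 1)).coeff (l + 1)‖ := hp.pow_le_norm_coeff_self (by linarith) (by omega)
  have hdeg : (p (l + 1)).natDegree = l + 1 :=
    natDegree_eq_of_le_of_coeff_ne_zero (hp.natDegree_le (by omega))
      (norm_pos_iff.mp ((coeffL1_nonneg _ _).trans_lt hdom))
  exact ⟨hdeg, fun x hx =>
    norm_lt_one_of_isRoot_of_coeffL1_lt hdeg.le hdom (isRoot_of_mem_roots hx)⟩

end IsKernelNumeratorSeq

/-- For every `n ≥ 1` there exist `α > -1` and `z ∈ 𝔻` such that
`ξ ↦ p_{α,n}(z̄ξ)/(1-z̄ξ)^{2+α+2n}` has exactly `n` zeros (with multiplicity) in the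
open unit disk: its zeros in 𝔻 are exactly those of the polynomial
`ξ ↦ p_{α,n}(z̄ξ)`, which has exactly `n` roots in 𝔻 counted with multiplicity. -/
theorem stmt12 (n : ℕ) (hn : 1 ≤ n) (p : ℝ → ℕ → Polynomial ℂ)
    (hp : ∀ α : ℝ, IsKernelNumeratorSeq α (p α)) :
    ∃ α : ℝ, -1 < α ∧ ∃ z : ℂ, ‖z‖ < 1 ∧
      (∀ ξ ∈ ball (0:ℂ) 1,
        ((p α n).eval ((starRingEnd ℂ) z * ξ) /
            (1 - (starRingEnd ℂ) z * ξ) ^ ((2:ℂ) + (α:ℂ) + 2 * (n:ℂ)) = 0 ↔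
          ((p α n).comp (C ((starRingEnd ℂ) z) * X)).eval ξ = 0)) ∧
      (((p α n).comp (C ((starRingEnd ℂ) z) * X)).roots.filter
          fun ξ => ‖ξ‖ < 1).card = n := by
  obtain ⟨l, rfl⟩ : ∃ l, n = l + 1 := ⟨n - 1, by omega⟩
  obtain ⟨α, hα, hroots⟩ := IsKernelNumeratorSeq.exists_roots_norm_lt_one l
  obtain ⟨hdeg, hdisc⟩ := hroots (p α) (hp α)
  obtain ⟨r, hr0, hr1, hr⟩ := (p α (l + 1)).roots.exists_lt_one_forall_norm_lt hdisc
  have hnorm : ‖(r : ℂ)‖ = r := Complex.norm_of_nonneg hr0.le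
  refine ⟨α, by linarith, r, by rwa [hnorm], fun ξ hξ => ?_, ?_⟩
  · have hrξ : ‖(r : ℂ) * ξ‖ < 1 := by
      rw [norm_mul, hnorm]
      exact mul_lt_one_of_nonneg_of_lt_one_left hr0.le hr1 (mem_ball_zero_iff.mp hξ).le
    rw [conj_ofReal, div_one_sub_cpow_eq_zero_iff hrξ, eval_comp]
    simp
  · rw [conj_ofReal, card_roots_comp_C_mul_X_filter_norm_lt_one (by exact_mod_cast hr0.ne')
      (by rwa [hnorm]), hdeg]
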